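/- The density matrix ρ = (1/6)(I − Σ_{i=1}^{6} |φ_i⟩⟨φ_i|) on ℂ^3 ⊗ ℂ^4 (grouping the last two qubit factors ℂ^2⊗ℂ^2 into ℂ^4) is invariant in positivity under partial transposition on the first factor: the partial transpose ρ^{T_A} is positive semidefinite. -/

import Mathlib

open scoped ComplexOrder

noncomputable section

def ket {n : ℕ} (k : Fin n) : Fin n → ℂ := fun j => if j = k then 1 else 0

def dif {n : ℕ} (a b : Fin n) : Fin n → ℂ :=
  fun j => if j = a then 1 else if j = b then -1 else 0

def tp (u : Fin 3 → ℂ) (v w : Fin 2 → ℂ) : Fin 3 × Fin 2 × Fin 2 → ℂ :=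
  fun p => u p.1 * v p.2.1 * w p.2.2

/-- The six normalized vectors `|φ_1⟩, …, |φ_6⟩` in `ℂ^3 ⊗ ℂ^2 ⊗ ℂ^2`. -/
def phi (i : Fin 6) : Fin 3 × Fin 2 × Fin 2 → ℂ :=
  match i with
  | 0 => (Real.sqrt 2 : ℂ)⁻¹ • tp (dif 0 1) (ket 0) (ket 0)
  | 1 => (Real.sqrt 2 : ℂ)⁻¹ • tp (dif 2 0) (ket 1) (ket 0)
  | 2 => (Real.sqrt 2 : ℂ)⁻¹ • tp (ket 1) (ket 1) (dif 0 1)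
  | 3 => (Real.sqrt 2 : ℂ)⁻¹ • tp (dif 1 2) (ket 0) (ket 1)
  | 4 => (Real.sqrt 2 : ℂ)⁻¹ • tp (ket 0) (dif 0 1) (ket 1)
  | 5 => (Real.sqrt 12 : ℂ)⁻¹ • tp (fun _ => 1) (fun _ => 1) (fun _ => 1)

/-- The grouping `ℂ^2 ⊗ ℂ^2 ≅ ℂ^4`, `|b⟩|c⟩ ↦ |2b+c⟩`. -/
def split4 (k : Fin 4) : Fin 2 × Fin 2 := (⟨k.val / 2, by omega⟩, ⟨k.val % 2, by omega⟩)

/-- `|φ_i⟩` viewed in `ℂ^3 ⊗ ℂ^4`. -/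
def phi' (i : Fin 6) : Fin 3 × Fin 4 → ℂ := fun p => phi i (p.1, split4 p.2)

/-- The state `ρ = (1/6)(I − Σ_{i=1}^{6} |φ_i⟩⟨φ_i|)` on `ℂ^3 ⊗ ℂ^4`. -/
def rho : Matrix (Fin 3 × Fin 4) (Fin 3 × Fin 4) ℂ :=
  (6 : ℂ)⁻¹ • ((1 : Matrix (Fin 3 × Fin 4) (Fin 3 × Fin 4) ℂ)
    - ∑ i : Fin 6, Matrix.vecMulVec (phi' i) (star (phi' i)))

/-- Partial transposition on the first (`ℂ^3`) factor:
`(ρ^{T_A})_{(i,k),(j,l)} = ρ_{(j,k),(i,l)}`. -/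
def ptA (M : Matrix (Fin 3 × Fin 4) (Fin 3 × Fin 4) ℂ) :
    Matrix (Fin 3 × Fin 4) (Fin 3 × Fin 4) ℂ :=
  Matrix.of fun p q => M (q.1, p.2) (p.1, q.2)

/-!
Each `φ_i` is a product vector `c • (u ⊗ v ⊗ w)` with `c` and `u` real. The partial transpose
of `|a ⊗ b⟩⟨a ⊗ b|` on the first factor is `|ā ⊗ b⟩⟨ā ⊗ b|`, so it fixes every `|φ_i⟩⟨φ_i|`, and
it fixes the identity; hence `ρ^{T_A} = ρ`. The `φ_i` are orthonormal, so `P = Σ |φ_i⟩⟨φ_i|` is an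
orthogonal projection and `ρ = (1 - P) / 6 ≥ 0`.
-/

open Matrix
open scoped MatrixOrder

theorem isStarProjection_sum_vecMulVec {𝕜 ι n : Type*} [RCLike 𝕜] [Fintype ι] [DecidableEq ι]
    [Fintype n] (v : ι → n → 𝕜) (hv : ∀ i j, star (v i) ⬝ᵥ v j = if i = j then 1 else 0) :
    IsStarProjection (∑ i, vecMulVec (v i) (star (v i))) where
  isIdempotentElem := by
    simp only [IsIdempotentElem, Finset.sum_mul_sum, vecMulVec_mul_vecMulVec, vecMulVec_smul]
    simp [hv]
  isSelfAdjoint := by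
    simp [IsSelfAdjoint, star_sum, star_eq_conjTranspose, conjTranspose_vecMulVec]

theorem star_ket {n : ℕ} (k : Fin n) : star (ket k) = ket k := by
  ext j; simp only [ket, Pi.star_apply]; split_ifs <;> simp

theorem star_dif {n : ℕ} (a b : Fin n) : star (dif a b) = dif a b := by
  ext j; simp only [dif, Pi.star_apply]; split_ifs <;> simp

theorem phi_eq_smul_tp (i : Fin 6) : ∃ (c : ℂ) (u : Fin 3 → ℂ) (v w : Fin 2 → ℂ),
    IsSelfAdjoint c ∧ IsSelfAdjoint u ∧ phi i = c • tp u v w := by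
  fin_cases i <;> refine ⟨_, _, _, _, ?_, ?_, rfl⟩ <;>
    simp [IsSelfAdjoint, star_ket, star_dif, Complex.conj_ofReal, ← Pi.one_def]

theorem ptA_vecMulVec_self_of_eq_mul (x : Fin 3 × Fin 4 → ℂ) (a : Fin 3 → ℂ) (b : Fin 4 → ℂ)
    (ha : IsSelfAdjoint a) (hx : ∀ p, x p = a p.1 * b p.2) :
    ptA (vecMulVec x (star x)) = vecMulVec x (star x) := by
  ext p q
  have h (i : Fin 3) : star (a i) = a i := congrFun ha.star_eq i
  simp only [ptA, of_apply, vecMulVec_apply, Pi.star_apply, hx, star_mul', h]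
  ring

theorem ptA_vecMulVec_phi' (i : Fin 6) :
    ptA (vecMulVec (phi' i) (star (phi' i))) = vecMulVec (phi' i) (star (phi' i)) := by
  obtain ⟨c, u, v, w, hc, hu, hphi⟩ := phi_eq_smul_tp i
  refine ptA_vecMulVec_self_of_eq_mul _ (c • u) (fun k => v (split4 k).1 * w (split4 k).2)
    (hc.smul hu) fun p => ?_
  simp only [phi', hphi, tp, Pi.smul_apply, smul_eq_mul]
  ring

theorem ptA_rho : ptA rho = rho := by
  ext p q
  have hterm (i : Fin 6) := congrFun₂ (ptA_vecMulVec_phi' i) p q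
  simp only [ptA, of_apply] at hterm ⊢
  simp only [rho, Matrix.smul_apply, Matrix.sub_apply, Matrix.sum_apply, one_apply, hterm,
    Prod.ext_iff]
  congr 3
  rw [eq_comm (a := q.1)]

theorem phi'_orthonormal (n m : Fin 6) :
    star (phi' n) ⬝ᵥ phi' m = if n = m then 1 else 0 := by
  fin_cases n <;> fin_cases m <;>
    simp [phi', phi, tp, ket, dif, split4, dotProduct, Fintype.sum_prod_type, Fin.sum_univ_succ,
      ← mul_inv, ← Complex.ofReal_mul] <;>
    norm_num

theorem rho_posSemidef : rho.PosSemidef :=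
  (isStarProjection_sum_vecMulVec phi' phi'_orthonormal).one_sub_nonneg.posSemidef.smul
    (by positivity)

/-- the partial transpose `ρ^{T_A}` of `ρ` on the first factor is
positive semidefinite. -/
theorem stmt7 : (ptA rho).PosSemidef :=
  ptA_rho ▸ rho_posSemidef

end
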